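/- Let L be the subfield of the algebraic closure of ℚ generated by all roots of unity of 2-power order, i.e. the compositum of the fields ℚ(ζ_{2^n}) for all n ≥ 1. Then for every rational prime p, there is no ring homomorphism from L into any finite field extension of the p-adic field ℚ_p; that is, L has unbounded local degrees at every rational prime. -/

import Mathlib

/-- `L` can be embedded in some finite extension of `ℚ_p` (bounded local degrees at `p`). -/
def HasBoundedLocalDegreesAt (p : ℕ) (hp : p.Prime) (L : Type*) [Field L] : Prop :=
  letI : Fact p.Prime := ⟨hp⟩
  ∃ (E : Type) (_ : Field E) (_ : Algebra ℚ_[p] E),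
    FiniteDimensional ℚ_[p] E ∧ Nonempty (L →+* E)

/-- The field generated over `ℚ` by all roots of unity of `2`-power order, i.e. the
compositum of the fields `ℚ(ζ_{2^n})`. -/
noncomputable def twoPowerCyclotomicField : IntermediateField ℚ (AlgebraicClosure ℚ) :=
  IntermediateField.adjoin ℚ {x : AlgebraicClosure ℚ | ∃ n : ℕ, x ^ (2 ^ n) = 1}

open Polynomial

variable {p : ℕ} [Fact p.Prime]

lemma aux_finite_quotient {A : Type*} [CommRing A] [Algebra ℤ_[p] A]
    [Module.Finite ℤ_[p] A] (I : Ideal A) (hI : (p : A) ∈ I) : Finite (A ⧸ I) := by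
  obtain ⟨s, hs⟩ := Module.finite_def.mp (inferInstance : Module.Finite ℤ_[p] A)
  let mk : A →+* A ⧸ I := Ideal.Quotient.mk I
  have key : ∀ z : ℤ_[p], mk (algebraMap ℤ_[p] A z)
      = mk ((((PadicInt.toZMod z).val : ℕ) : A)) := by
    intro z
    have hker : z - (((PadicInt.toZMod z).val : ℕ) : ℤ_[p]) ∈ RingHom.ker (PadicInt.toZMod (p := p)) := by
      simp [RingHom.mem_ker, map_sub, map_natCast, ZMod.natCast_rightInverse _]
      exact sub_eq_zero.mpr rfl
    rw [PadicInt.ker_toZMod, PadicInt.maximalIdeal_eq_span_p, Ideal.mem_span_singleton] at hker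
    obtain ⟨d, hd⟩ := hker
    rw [← sub_eq_zero, ← map_sub, ← map_natCast (algebraMap ℤ_[p] A), ← map_sub, hd, map_mul,
      map_natCast]
    exact Ideal.Quotient.eq_zero_iff_mem.mpr (I.mul_mem_right _ hI)
  have hsurj : Function.Surjective
      (fun c : (↥s → ZMod p) => mk (∑ i ∈ s.attach, ((c i).val : A) * (i : A))) := by
    intro q
    obtain ⟨a, rfl⟩ := Ideal.Quotient.mk_surjective (I := I) q
    have ha : a ∈ Submodule.span ℤ_[p] (s : Set A) := hs ▸ Submodule.mem_top
    obtain ⟨f, -, hf⟩ := Submodule.mem_span_finset.mp ha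
    refine ⟨fun i => PadicInt.toZMod (f i), ?_⟩
    calc mk (∑ i ∈ s.attach, (((PadicInt.toZMod (f (i : A))).val : ℕ) : A) * (i : A))
        = ∑ i ∈ s.attach, mk ((((PadicInt.toZMod (f (i : A))).val : ℕ) : A)) * mk (i : A) := by
          rw [map_sum]; simp [map_mul]
      _ = ∑ i ∈ s.attach, mk (algebraMap ℤ_[p] A (f (i : A))) * mk (i : A) := by
          refine Finset.sum_congr rfl fun i _ => ?_; rw [key]
      _ = mk (∑ i ∈ s.attach, algebraMap ℤ_[p] A (f (i : A)) * (i : A)) := by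
          rw [map_sum]; simp [map_mul]
      _ = mk a := by
          congr 1
          rw [← hf, ← Finset.sum_attach s (fun i => f i • i)]
          exact Finset.sum_congr rfl fun i _ => (Algebra.smul_def _ _).symm
  exact Finite.of_surjective _ hsurj

set_option maxHeartbeats 1600000 in
set_option synthInstance.maxHeartbeats 400000 in
lemma aux_no_tower (E : Type) [Field E] [Algebra ℚ_[p] E] [FiniteDimensional ℚ_[p] E]
    (x : ℕ → E) (h1 : ∀ n, x n ^ 2 ^ (n + 1) = 1) (h2 : ∀ n, x n ^ 2 ^ n = -1)
    (hsq : ∀ n, x (n + 1) ^ 2 = x n) : False := by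
  classical
  letI : Algebra ℤ_[p] E := ((algebraMap ℚ_[p] E).comp (algebraMap ℤ_[p] ℚ_[p])).toAlgebra
  haveI : IsScalarTower ℤ_[p] ℚ_[p] E := IsScalarTower.of_algebraMap_eq fun _ => rfl
  haveI : CharZero E := charZero_of_injective_algebraMap (algebraMap ℚ_[p] E).injective
  set O := integralClosure ℤ_[p] E with hO
  haveI hnoeth : IsNoetherian ℤ_[p] O := IsIntegralClosure.isNoetherian ℤ_[p] ℚ_[p] E O
  have hppos := (Fact.out (p := p.Prime)).pos
  -- the key divisibility transfer
  have key : ∀ c : ℕ, (p : O) ∣ (c : O) → p ∣ c := by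
    intro c ⟨b, hb⟩
    have hbE : (c : E) = (p : E) * (b : E) := by exact_mod_cast congrArg Subtype.val hb
    have hp0 : (p : ℚ_[p]) ≠ 0 := Nat.cast_ne_zero.mpr hppos.ne'
    have hpE : (p : E) ≠ 0 := Nat.cast_ne_zero.mpr hppos.ne'
    have hq : algebraMap ℚ_[p] E ((c : ℚ_[p]) / (p : ℚ_[p])) = (b : E) := by
      rw [map_div₀, map_natCast, map_natCast, hbE, mul_div_cancel_left₀ _ hpE]
    have hint : IsIntegral ℤ_[p] ((c : ℚ_[p]) / (p : ℚ_[p])) := by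
      rw [← isIntegral_algebraMap_iff (algebraMap ℚ_[p] E).injective, hq]
      exact b.2
    obtain ⟨y, hy⟩ := IsIntegrallyClosed.isIntegral_iff.mp hint
    have hy' : (y : ℚ_[p]) = (c : ℚ_[p]) / (p : ℚ_[p]) := hy
    have hyy : (p : ℤ_[p]) * y = (c : ℤ_[p]) := by
      apply Subtype.coe_injective
      push_cast
      rw [hy', mul_div_cancel₀ _ hp0]
    have := congrArg PadicInt.toZMod hyy
    rw [map_mul, map_natCast, map_natCast, ZMod.natCast_self, zero_mul] at this
    exact (ZMod.natCast_eq_zero_iff c p).mp this.symm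
  -- lift x to the integral closure
  have hxint : ∀ n, IsIntegral ℤ_[p] (x n) := by
    intro n
    refine ⟨X ^ 2 ^ (n + 1) - C 1, monic_X_pow_sub_C 1 (by positivity), ?_⟩
    simp [eval₂_sub, eval₂_pow, h1 n]
  set xo : ℕ → O := fun n => ⟨x n, hxint n⟩ with hxo
  have ho1 : ∀ n, xo n ^ 2 ^ (n + 1) = 1 := fun n => Subtype.ext (by push_cast [hxo]; exact h1 n)
  have ho2 : ∀ n, xo n ^ 2 ^ n = -1 := fun n => Subtype.ext (by push_cast [hxo]; exact h2 n)
  have hosq : ∀ n, xo (n + 1) ^ 2 = xo n := fun n => Subtype.ext (by push_cast [hxo]; exact hsq n)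
  have hfac : ∀ n, 1 - xo n = (1 - xo (n + 1)) * (1 + xo (n + 1)) := by
    intro n; rw [← hosq n]; ring
  rcases (Fact.out (p := p.Prime)).eq_two_or_odd' with hp2 | hodd
  · -- p = 2 : Noetherian chain argument
    subst hp2
    haveI : IsNoetherian O O := isNoetherian_of_tower ℤ_[2] hnoeth
    let J : ℕ →o Ideal O :=
      ⟨fun n => Ideal.span {1 - xo n}, monotone_nat_of_le_succ (fun n => by
        rw [Ideal.span_le, Set.singleton_subset_iff, hfac n]
        exact Ideal.mul_mem_right _ _ (Ideal.subset_span rfl))⟩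
    obtain ⟨N, hN⟩ := monotone_stabilizes_iff_noetherian.mpr
      (inferInstance : IsNoetherian O O) J
    have hmem : 1 - xo (N + 1) ∈ J N := by
      rw [hN (N + 1) (Nat.le_succ N)]
      exact Ideal.subset_span rfl
    obtain ⟨a, ha⟩ := Ideal.mem_span_singleton'.mp hmem
    have hx1 : xo (N + 1) ≠ 1 := by
      intro h
      have h' := ho2 (N + 1)
      rw [h, one_pow] at h'
      have hE : (1 : E) = -1 := by exact_mod_cast congrArg Subtype.val h'
      have : (2 : E) = 0 := by linear_combination hE
      exact two_ne_zero this
    have hzero : (1 - xo (N + 1)) * (a * (1 + xo (N + 1)) - 1) = 0 := by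
      rw [hfac N] at ha; linear_combination ha
    have hunit : a * (1 + xo (N + 1)) = 1 := by
      rcases mul_eq_zero.mp hzero with h | h
      · exact absurd (by linear_combination -h) hx1
      · linear_combination h
    obtain ⟨r, hr⟩ := exists_add_pow_prime_pow_eq Nat.prime_two (1 : O) (xo (N + 1)) (N + 2)
    rw [one_pow, ho1 (N + 1)] at hr
    push_cast at hr
    have h2dvd : (2 : O) ∣ 1 := by
      refine ⟨(1 + xo (N + 1) * r) * a ^ 2 ^ (N + 2), ?_⟩
      have hpow : a ^ 2 ^ (N + 2) * (1 + xo (N + 1)) ^ 2 ^ (N + 2) = 1 := by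
        rw [← mul_pow, hunit, one_pow]
      rw [hr] at hpow
      linear_combination -hpow
    have : (2 : ℕ) ∣ 1 := key 1 (by push_cast; exact h2dvd)
    omega
  · -- p odd : residue counting argument
    haveI : Module.Finite ℤ_[p] O := ⟨IsNoetherian.noetherian ⊤⟩
    set I : Ideal O := Ideal.span {(p : O)} with hI
    haveI hfin : Finite (O ⧸ I) := aux_finite_quotient I (Ideal.subset_span rfl)
    set n := Nat.card (O ⧸ I) with hn
    set mk : O →+* O ⧸ I := Ideal.Quotient.mk I with hmk
    have main : ∀ j : ℕ, 0 < j → j < 2 ^ (n + 1) → mk (xo n) ^ j = 1 → False := by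
      intro j hj0 hj hpow1
      set s := j.factorization 2 with hsdef
      have hsj : 2 ^ s ∣ j := Nat.ordProj_dvd j 2
      have ht2 : ¬ 2 ∣ (j / 2 ^ s) := Nat.not_dvd_ordCompl Nat.prime_two hj0.ne'
      have htodd : Odd (j / 2 ^ s) := Nat.odd_iff.mpr (by omega)
      have hsle : s ≤ n := by
        by_contra h
        have h1' : 2 ^ (n + 1) ≤ 2 ^ s := Nat.pow_le_pow_right (by norm_num) (by omega)
        have h2' := Nat.le_of_dvd hj0 hsj
        omega
      obtain ⟨t, htt⟩ := hsj
      have hdivt : j / 2 ^ s = t := by rw [htt, Nat.mul_div_cancel_left _ (Nat.two_pow_pos s)]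
      have hexp : j * 2 ^ (n - s) = 2 ^ n * (j / 2 ^ s) := by
        rw [hdivt, htt, mul_comm (2 ^ s) t, mul_assoc, ← pow_add, Nat.add_sub_cancel' hsle]
        ring
      have hOpow : (xo n ^ j) ^ 2 ^ (n - s) = -1 := by
        rw [← pow_mul, hexp, pow_mul, ho2 n, htodd.neg_one_pow]
      have hm1 : mk (-1 : O) = 1 := by
        calc mk (-1 : O) = mk ((xo n ^ j) ^ 2 ^ (n - s)) := by rw [hOpow]
          _ = (mk (xo n) ^ j) ^ 2 ^ (n - s) := by rw [map_pow, map_pow]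
          _ = 1 := by rw [hpow1, one_pow]
      have h2I : mk (2 : O) = 0 := by
        rw [show (2 : O) = 1 - (-1) by ring, map_sub, hm1, map_one, sub_self]
      have hdvd2 : (p : O) ∣ (2 : O) := by
        rw [← Ideal.mem_span_singleton, ← hI]
        exact Ideal.Quotient.eq_zero_iff_mem.mp h2I
      have hp2 : p ∣ 2 := key 2 (by push_cast; exact hdvd2)
      have hp2' : p = 2 := (Nat.prime_dvd_prime_iff_eq (Fact.out) Nat.prime_two).mp hp2
      rw [Nat.odd_iff, hp2'] at hodd
      omega
    have hu : IsUnit (mk (xo n)) := by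
      apply IsUnit.of_mul_eq_one (mk (xo n ^ (2 ^ (n + 1) - 1)))
      rw [← map_mul, ← pow_succ']
      rw [show 2 ^ (n + 1) - 1 + 1 = 2 ^ (n + 1) by
        have := Nat.one_le_two_pow (n := n + 1); omega]
      rw [ho1 n, map_one]
    have cancel : ∀ k l : ℕ, k < l → l < 2 ^ (n + 1) →
        mk (xo n) ^ k = mk (xo n) ^ l → False := by
      intro k l hkl hlB heq
      have heq2 : mk (xo n) ^ k * mk (xo n) ^ (l - k)
          = mk (xo n) ^ k * 1 := by
        rw [mul_one, ← pow_add, show k + (l - k) = l by omega]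
        exact heq.symm
      have h1' := (hu.pow k).mul_left_cancel heq2
      exact main _ (by omega) (by omega) h1'
    have hinj : Function.Injective (fun k : Fin (2 ^ (n + 1)) => mk (xo n) ^ (k : ℕ)) := by
      intro k l heq
      rcases lt_trichotomy (k : ℕ) (l : ℕ) with h | h | h
      · exact absurd (cancel (k : ℕ) (l : ℕ) h l.isLt heq) id
      · exact Fin.ext h
      · exact absurd (cancel (l : ℕ) (k : ℕ) h k.isLt heq.symm) id
    have hcard := Nat.card_le_card_of_injective _ hinj
    rw [Nat.card_eq_fintype_card, Fintype.card_fin] at hcard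
    have := Nat.lt_two_pow_self (n := n)
    have h2n : 2 ^ n < 2 ^ (n + 1) := by
      have : (2:ℕ) ^ n ≥ 1 := Nat.one_le_two_pow
      calc 2 ^ n < 2 ^ n + 2 ^ n := by omega
        _ = 2 ^ (n + 1) := by rw [pow_succ]; omega
    omega

noncomputable def zetaSeq : ℕ → AlgebraicClosure ℚ
  | 0 => -1
  | n + 1 => Classical.choose (IsAlgClosed.exists_pow_nat_eq (zetaSeq n) (zero_lt_two))

lemma zetaSeq_sq (n : ℕ) : zetaSeq (n + 1) ^ 2 = zetaSeq n :=
  Classical.choose_spec (IsAlgClosed.exists_pow_nat_eq (zetaSeq n) (zero_lt_two))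

lemma zetaSeq_pow_neg (n : ℕ) : zetaSeq n ^ 2 ^ n = -1 := by
  induction n with
  | zero => simp [zetaSeq]
  | succ n ih => rw [pow_succ, mul_comm, pow_mul, zetaSeq_sq, ih]

lemma zetaSeq_pow_one (n : ℕ) : zetaSeq n ^ 2 ^ (n + 1) = 1 := by
  rw [pow_succ, pow_mul, zetaSeq_pow_neg, neg_one_sq]

theorem two_power_cyclotomic_unbounded_local_degrees'
    (p : ℕ) (hp : p.Prime) :
    ¬ (letI : Fact p.Prime := ⟨hp⟩
      ∃ (E : Type) (_ : Field E) (_ : Algebra ℚ_[p] E),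
        FiniteDimensional ℚ_[p] E ∧ Nonempty ((twoPowerCyclotomicField : IntermediateField ℚ (AlgebraicClosure ℚ)) →+* E)) := by
  haveI : Fact p.Prime := ⟨hp⟩
  intro h
  obtain ⟨E, hF, hA, hfd, ⟨φ⟩⟩ := h
  have mem : ∀ n, zetaSeq n ∈ twoPowerCyclotomicField := by
    intro n
    unfold twoPowerCyclotomicField
    exact IntermediateField.subset_adjoin ℚ _ ⟨n + 1, zetaSeq_pow_one n⟩
  let z : ℕ → twoPowerCyclotomicField := fun n => ⟨zetaSeq n, mem n⟩
  refine aux_no_tower (p := p) E (fun n => φ (z n)) ?_ ?_ ?_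
  · intro n
    have : φ (z n ^ 2 ^ (n + 1)) = φ 1 := by
      congr 1; exact Subtype.ext (by push_cast [z]; exact zetaSeq_pow_one n)
    simpa [map_pow, map_one] using this
  · intro n
    have : φ (z n ^ 2 ^ n) = φ (-1) := by
      congr 1; exact Subtype.ext (by push_cast [z]; exact zetaSeq_pow_neg n)
    simpa [map_pow, map_neg, map_one] using this
  · intro n
    have : φ (z (n + 1) ^ 2) = φ (z n) := by
      congr 1; exact Subtype.ext (by push_cast [z]; exact zetaSeq_sq n)
    simpa [map_pow] using this

/-- The compositum of the fields `ℚ(ζ_{2^n})` has unbounded local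
degrees at every rational prime: it admits no ring homomorphism into any finite
extension of `ℚ_p`. -/
theorem two_power_cyclotomic_unbounded_local_degrees
    (p : ℕ) (hp : p.Prime) :
    ¬ HasBoundedLocalDegreesAt p hp twoPowerCyclotomicField := fun h =>
  two_power_cyclotomic_unbounded_local_degrees' p hp h
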